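/- arXiv:1101.1633 — 2 statements merged into one kernel-verified Lean document; each statement's English description precedes it below -/
import Mathlib

section
/- In the star graph S_n, the strategy profile where only the center is inoculated minimizes social cost; the optimal social cost is C + (n−1)L/n. -/
open Finset
open scoped Classical

noncomputable section

variable {V : Type*} [Fintype V] [DecidableEq V]

/-- Reachability through insecure players: a path along edges whose endpoints are all insecure. -/
def insecureReach (G : SimpleGraph V) (a : V → Bool) : V → V → Prop :=
  Relation.ReflTransGen (fun x y => G.Adj x y ∧ a x = false ∧ a y = false)

/-- Size of `i`'s attack component (if `i` is secure: the size of the component that would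
result if `i` became insecure). -/
def compSize (G : SimpleGraph V) (a : V → Bool) (i : V) : ℕ :=
  {j | insecureReach G (Function.update a i false) i j}.ncard

/-- Actual individual cost: `C` if inoculated, else `L · k_i / n`. -/
def actualCost (G : SimpleGraph V) (C L : ℝ) (a : V → Bool) (i : V) : ℝ :=
  if a i = true then C else L * (compSize G a i) / (Fintype.card V)

def socialCost (G : SimpleGraph V) (C L : ℝ) (a : V → Bool) : ℝ :=
  ∑ i, actualCost G C L a i

/-- Perceived cost: actual cost plus `F` times the sum of the neighbors' actual costs. -/
def perceivedCost (G : SimpleGraph V) (C L F : ℝ) (a : V → Bool) (i : V) : ℝ :=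
  actualCost G C L a i +
    F * ∑ j ∈ Finset.univ.filter (fun j => G.Adj i j), actualCost G C L a j

/-- Pure Nash equilibrium: no unilateral deviation lowers the actual cost. -/
def isNE (G : SimpleGraph V) (C L : ℝ) (a : V → Bool) : Prop :=
  ∀ (i : V) (b : Bool),
    actualCost G C L a i ≤ actualCost G C L (Function.update a i b) i

/-- Friendship Nash equilibrium: no unilateral deviation lowers the perceived cost. -/
def isFNE (G : SimpleGraph V) (C L F : ℝ) (a : V → Bool) : Prop :=
  ∀ (i : V) (b : Bool),
    perceivedCost G C L F a i ≤ perceivedCost G C L F (Function.update a i b) i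

/-- Star graph on `Fin n` with center `0`. -/
def starG (n : ℕ) : SimpleGraph (Fin n) :=
  SimpleGraph.fromRel (fun i _ => i.val = 0)

lemma starG_adj {n : ℕ} {i j : Fin n} :
    (starG n).Adj i j ↔ i ≠ j ∧ (i.val = 0 ∨ j.val = 0) := by
  simp [starG, SimpleGraph.fromRel_adj]

lemma compSize_ge_one (G : SimpleGraph V) (a : V → Bool) (i : V) :
    1 ≤ compSize G a i := by
  have hi : i ∈ {j | insecureReach G (Function.update a i false) i j} :=
    Relation.ReflTransGen.refl
  have h := (Set.ncard_pos (Set.toFinite _)).mpr ⟨i, hi⟩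
  unfold compSize
  omega

/-- In the all-insecure profile on the star, every component is everything. -/
lemma star_reach_all {n : ℕ} (hn : 0 < n) (a : Fin n → Bool)
    (ha : ∀ i, a i = false) (i j : Fin n) :
    insecureReach (starG n) a i j := by
  set z : Fin n := ⟨0, hn⟩ with hz
  have step : ∀ x y : Fin n, x ≠ y → (x.val = 0 ∨ y.val = 0) →
      Relation.ReflTransGen
        (fun x y => (starG n).Adj x y ∧ a x = false ∧ a y = false) x y :=
    fun x y hxy h0 => Relation.ReflTransGen.single ⟨starG_adj.mpr ⟨hxy, h0⟩, ha x, ha y⟩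
  by_cases hij : i = j
  · subst hij; exact Relation.ReflTransGen.refl
  · by_cases hi : i = z
    · exact step i j hij (Or.inl (by rw [hi]))
    · by_cases hj : j = z
      · exact step i j hij (Or.inr (by rw [hj]))
      · exact Relation.ReflTransGen.trans
          (step i z hi (Or.inr rfl)) (step z j (fun h => hj h.symm) (Or.inl rfl))

lemma compSize_all_false {n : ℕ} (hn : 0 < n) (a : Fin n → Bool)
    (ha : ∀ i, a i = false) (i : Fin n) :
    compSize (starG n) a i = n := by
  unfold compSize
  have hupd : Function.update a i false = a := by
    rw [← ha i]; exact Function.update_eq_self i a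
  rw [hupd]
  have : {j | insecureReach (starG n) a i j} = Set.univ :=
    Set.eq_univ_of_forall (fun j => star_reach_all hn a ha i j)
  rw [this, Set.ncard_univ, Nat.card_eq_fintype_card, Fintype.card_fin]

/-- In the center-only profile, a leaf's component is just itself. -/
lemma compSize_leaf {n : ℕ} (i : Fin n) (hi : i.val ≠ 0) :
    compSize (starG n) (fun k => k.val == 0) i = 1 := by
  unfold compSize
  set a0 : Fin n → Bool := fun k => k.val == 0 with ha0
  have hupd : Function.update a0 i false = a0 := by
    have : a0 i = false := by simp [ha0, hi]
    rw [← this]; exact Function.update_eq_self i a0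
  rw [hupd]
  have hset : {j | insecureReach (starG n) a0 i j} = {i} := by
    ext j
    simp only [Set.mem_setOf_eq, Set.mem_singleton_iff]
    constructor
    · intro h
      induction h with
      | refl => rfl
      | tail _ hstep ih =>
        exfalso
        obtain ⟨hadj, hx, hy⟩ := hstep
        rcases (starG_adj.mp hadj).2 with h0 | h0
        · simp [ha0, h0] at hx
        · simp [ha0, h0] at hy
    · rintro rfl; exact Relation.ReflTransGen.refl
  rw [hset, Set.ncard_singleton]

/-- Lemma (social optimum of the star `S_n`): the profile in which only the center is inoculated
has social cost `C + (n−1)L/n`, and it minimizes the social cost over all profiles. -/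
theorem stmt7 (n : ℕ) (C L : ℝ) (hn : 0 < n) (hL : 0 < L)
    (hC : L / n < C) (hCL : C ≤ L) :
    socialCost (starG n) C L (fun i => i.val == 0) = C + ((n : ℝ) - 1) * L / n ∧
    ∀ a : Fin n → Bool,
      socialCost (starG n) C L (fun i => i.val == 0) ≤ socialCost (starG n) C L a := by
  have hn0 : (0:ℝ) < n := by exact_mod_cast hn
  have hnne : (n:ℝ) ≠ 0 := ne_of_gt hn0
  set z : Fin n := ⟨0, hn⟩ with hz
  set a0 : Fin n → Bool := fun i => i.val == 0 with ha0
  -- cost of each player in a0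
  have hcost : ∀ i : Fin n, actualCost (starG n) C L a0 i = if i = z then C else L / n := by
    intro i
    by_cases hi : i = z
    · subst hi
      have : a0 z = true := by simp [ha0, hz]
      simp [actualCost, this]
    · have hival : i.val ≠ 0 := fun h => hi (Fin.ext h)
      have hfalse : a0 i = false := by simp [ha0, hival]
      simp only [actualCost, hfalse]
      rw [compSize_leaf i hival]
      simp [hi, Fintype.card_fin]
  have heq : socialCost (starG n) C L a0 = C + ((n : ℝ) - 1) * L / n := by
    unfold socialCost
    calc ∑ i, actualCost (starG n) C L a0 i
        = ∑ i : Fin n, ((if i = z then C - L / n else 0) + L / n) := by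
          refine Finset.sum_congr rfl (fun i _ => ?_)
          rw [hcost i]; split_ifs <;> ring
      _ = (∑ i : Fin n, if i = z then C - L / n else 0) + ∑ _i : Fin n, L / n := by
          rw [Finset.sum_add_distrib]
      _ = (C - L / n) + n * (L / n) := by
          rw [Finset.sum_ite_eq' Finset.univ z (fun _ => C - L / n)]
          simp [Finset.sum_const, Fintype.card_fin, mul_comm]
      _ = C + ((n : ℝ) - 1) * L / n := by field_simp; ring
  refine ⟨heq, fun a => ?_⟩
  rw [heq]
  by_cases hall : ∀ i, a i = false
  · -- nobody inoculated : total cost n * L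
    have hc : ∀ i : Fin n, actualCost (starG n) C L a i = L := by
      intro i
      simp only [actualCost, hall i, Bool.false_eq_true, if_false]
      rw [compSize_all_false hn a hall i]
      rw [Fintype.card_fin]
      field_simp
    have : socialCost (starG n) C L a = n * L := by
      unfold socialCost
      rw [Finset.sum_congr rfl (fun i _ => hc i)]
      simp [Finset.sum_const, Fintype.card_fin]
    rw [this]
    have hd : ((n:ℝ) - 1) * L / n * n = ((n:ℝ) - 1) * L := by field_simp
    have hn1 : (1:ℝ) ≤ n := by exact_mod_cast hn
    nlinarith [mul_nonneg (mul_nonneg (sub_nonneg.mpr hn1) hL.le) (sub_nonneg.mpr hn1)]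
  · push_neg at hall
    obtain ⟨i0, hi0⟩ := hall
    have hi0' : a i0 = true := by
      cases h : a i0 with
      | false => exact absurd h hi0
      | true => rfl
    -- pointwise lower bound
    have hlow : ∀ i : Fin n, (if a i = true then C else L / n) ≤ actualCost (starG n) C L a i := by
      intro i
      unfold actualCost
      split_ifs with h
      · exact le_refl _
      · rw [Fintype.card_fin]
        have hk : (1:ℝ) ≤ (compSize (starG n) a i : ℝ) := by
          exact_mod_cast compSize_ge_one (starG n) a i
        calc L / n = L * 1 / n := by ring
          _ ≤ L * (compSize (starG n) a i) / n := by gcongr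
    have hsum : ∑ i, (if a i = true then C else L / n) ≤ socialCost (starG n) C L a :=
      Finset.sum_le_sum (fun i _ => hlow i)
    set s := Finset.univ.filter (fun i : Fin n => a i = true) with hs
    set t := Finset.univ.filter (fun i : Fin n => ¬ a i = true) with ht
    have hsplit : ∑ i, (if a i = true then C else L / n)
        = (s.card : ℝ) * C + (t.card : ℝ) * (L / n) := by
      rw [Finset.sum_ite]
      simp [hs, ht, Finset.sum_const, nsmul_eq_mul]
    have hcard : s.card + t.card = n := by
      rw [hs, ht, Finset.card_filter_add_card_filter_not]
      simp
    have hm1 : 1 ≤ s.card := by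
      refine Finset.card_pos.mpr ⟨i0, ?_⟩
      simp [hs, hi0']
    have hm1' : (1:ℝ) ≤ (s.card : ℝ) := by exact_mod_cast hm1
    have hcard' : (s.card : ℝ) + (t.card : ℝ) = n := by exact_mod_cast hcard
    have ht' : (t.card : ℝ) = (n : ℝ) - (s.card : ℝ) := by linarith
    have key : 0 ≤ ((s.card : ℝ) - 1) * (C - L / n) :=
      mul_nonneg (by linarith) (by linarith [hC])
    calc C + ((n:ℝ) - 1) * L / n
        ≤ (s.card : ℝ) * C + (t.card : ℝ) * (L / n) := by
          rw [ht']
          have expand : (s.card:ℝ)*C + ((n:ℝ) - (s.card:ℝ))*(L/n) - (C + ((n:ℝ)-1)*L/n)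
              = ((s.card:ℝ)-1)*(C - L/n) := by ring
          linarith [key, expand]
      _ ≤ socialCost (starG n) C L a := by rw [← hsplit]; exact hsum
end
end

section
/- With parameters C = 1 and L = n/1.5, a strategy profile of the virus inoculation game with friendship factor F ∈ [0,1] is a friendship Nash equilibrium if and only if (a) every insecure player has no insecure neighbor, and (b) every inoculated player has at least one insecure neighbor. Equivalently, the set of insecure players in any FNE is an independent dominating set of G, and the set of secure players is a minimal vertex cover. -/
/-!
With `C = 1` and `L = n / 1.5`, an insecure player whose attack component has size `k` pays
`2k/3`: this is `2/3 < 1` if it has no insecure neighbour and at least `4/3 > 1` otherwise.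
Becoming secure can only shrink the neighbours' attack components and becoming insecure can only
enlarge them, so for `F ≥ 0` the friendship term of the perceived cost moves in the same direction
as the deviator's own cost, and the own cost alone decides whether a deviation pays off.
-/

open Finset
open scoped Classical

noncomputable section

variable {V : Type*} [Fintype V] [DecidableEq V]

section Reach

variable {G : SimpleGraph V} {a a' : V → Bool}

omit [Fintype V] [DecidableEq V] in
theorem insecureReach_mono (h : ∀ x, a x = false → a' x = false) {i j : V}
    (hij : insecureReach G a i j) : insecureReach G a' i j :=
  Relation.ReflTransGen.mono (fun _ _ ⟨hxy, hx, hy⟩ => ⟨hxy, h _ hx, h _ hy⟩) i j hij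

omit [Fintype V] [DecidableEq V] in
theorem insecureReach_eq_of_forall_adj {i j : V} (h : ∀ k, G.Adj i k → a k = true)
    (hij : insecureReach G a i j) : j = i := by
  rcases Relation.ReflTransGen.cases_head hij with rfl | ⟨k, ⟨hik, -, hk⟩, -⟩
  · rfl
  · simp [h k hik] at hk

theorem compSize_mono (h : ∀ x, a x = false → a' x = false) (i : V) :
    compSize G a i ≤ compSize G a' i := by
  refine Set.ncard_le_ncard (fun j hj => insecureReach_mono (fun x hx => ?_) hj) (Set.toFinite _)
  rcases eq_or_ne x i with rfl | hxi
  · simp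
  · rw [Function.update_of_ne hxi] at hx ⊢
    exact h x hx

omit [Fintype V] in
theorem compSize_eq_one {i : V} (h : ∀ j, G.Adj i j → a j = true) : compSize G a i = 1 := by
  have h' : ∀ j, G.Adj i j → Function.update a i false j = true := fun j hij => by
    rw [Function.update_of_ne hij.ne']
    exact h j hij
  have hcomp : {j | insecureReach G (Function.update a i false) i j} = {i} :=
    Set.eq_singleton_iff_unique_mem.mpr
      ⟨Relation.ReflTransGen.refl, fun j hj => insecureReach_eq_of_forall_adj h' hj⟩
  rw [compSize, hcomp, Set.ncard_singleton]

theorem two_le_compSize {i j : V} (hij : G.Adj i j) (hj : a j = false) :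
    2 ≤ compSize G a i := by
  have hj' : insecureReach G (Function.update a i false) i j := by
    refine Relation.ReflTransGen.single ⟨hij, by simp, ?_⟩
    rwa [Function.update_of_ne hij.ne']
  exact (Set.one_lt_ncard (Set.toFinite _)).mpr ⟨i, Relation.ReflTransGen.refl, j, hj', hij.ne⟩

end Reach

section Cost

variable {G : SimpleGraph V} {C L F : ℝ} {a a' : V → Bool} {i : V}

theorem actualCost_of_true (h : a i = true) : actualCost G C L a i = C := by
  simp [actualCost, h]

theorem actualCost_of_false (h : a i = false) :
    actualCost G C L a i = L * compSize G a i / Fintype.card V := by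
  simp [actualCost, h]

theorem actualCost_le_actualCost (hL : 0 ≤ L) (h : ∀ x, a x = false → a' x = false)
    (hi : a' i = a i) : actualCost G C L a i ≤ actualCost G C L a' i := by
  cases hai : a i
  · rw [actualCost_of_false hai, actualCost_of_false (hi.trans hai)]
    gcongr
    exact compSize_mono h i
  · rw [actualCost_of_true hai, actualCost_of_true (hi.trans hai)]

theorem perceivedCost_le_perceivedCost (hF : 0 ≤ F)
    (hi : actualCost G C L a i ≤ actualCost G C L a' i)
    (hnbr : ∀ j, G.Adj i j → actualCost G C L a j ≤ actualCost G C L a' j) :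
    perceivedCost G C L F a i ≤ perceivedCost G C L F a' i := by
  unfold perceivedCost
  gcongr with j hj
  exact hnbr j (mem_filter.mp hj).2

theorem perceivedCost_lt_perceivedCost (hF : 0 ≤ F)
    (hi : actualCost G C L a i < actualCost G C L a' i)
    (hnbr : ∀ j, G.Adj i j → actualCost G C L a j ≤ actualCost G C L a' j) :
    perceivedCost G C L F a i < perceivedCost G C L F a' i := by
  refine add_lt_add_of_lt_of_le hi ?_
  gcongr with j hj
  exact hnbr j (mem_filter.mp hj).2

end Cost

section Update

variable {G : SimpleGraph V} {C L : ℝ} {a : V → Bool} {i j : V}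

theorem actualCost_update_true_le (hL : 0 ≤ L) (hji : j ≠ i) :
    actualCost G C L (Function.update a i true) j ≤ actualCost G C L a j := by
  refine actualCost_le_actualCost hL (fun x hx => ?_) (Function.update_of_ne hji _ _).symm
  rcases eq_or_ne x i with rfl | hxi
  · simp at hx
  · rwa [Function.update_of_ne hxi] at hx

theorem actualCost_le_update_false (hL : 0 ≤ L) (hji : j ≠ i) :
    actualCost G C L a j ≤ actualCost G C L (Function.update a i false) j := by
  refine actualCost_le_actualCost hL (fun x hx => ?_) (Function.update_of_ne hji _ _)
  rcases eq_or_ne x i with rfl | hxi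
  · simp
  · rwa [Function.update_of_ne hxi]

theorem actualCost_update_of_true (hji : j ≠ i) (hj : a j = true) (b : Bool) :
    actualCost G C L (Function.update a i b) j = actualCost G C L a j := by
  rw [actualCost_of_true hj, actualCost_of_true (by rwa [Function.update_of_ne hji])]

end Update

section TwoThirds

variable {G : SimpleGraph V} {C : ℝ} {a : V → Bool} {i j : V}

theorem actualCost_of_false_eq (ha : a i = false) :
    actualCost G C ((Fintype.card V : ℝ) / 1.5) a i = 2 * compSize G a i / 3 := by
  have hn : (Fintype.card V : ℝ) ≠ 0 := by
    have : Nonempty V := ⟨i⟩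
    positivity
  rw [actualCost_of_false ha]
  field_simp
  ring

theorem actualCost_eq_two_thirds (ha : a i = false) (h : ∀ j, G.Adj i j → a j = true) :
    actualCost G C ((Fintype.card V : ℝ) / 1.5) a i = 2 / 3 := by
  rw [actualCost_of_false_eq ha, compSize_eq_one h]
  norm_num

theorem four_thirds_le_actualCost (ha : a i = false) (hij : G.Adj i j) (hj : a j = false) :
    4 / 3 ≤ actualCost G C ((Fintype.card V : ℝ) / 1.5) a i := by
  have hk : (2 : ℝ) ≤ compSize G a i := by exact_mod_cast two_le_compSize hij hj
  rw [actualCost_of_false_eq ha]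
  linarith

end TwoThirds

theorem stmt13_general (G : SimpleGraph V) (F : ℝ) (hF0 : 0 ≤ F) (a : V → Bool) :
    isFNE G 1 ((Fintype.card V : ℝ) / 1.5) F a ↔
      ((∀ i, a i = false → ∀ j, G.Adj i j → a j = true) ∧
       (∀ i, a i = true → ∃ j, G.Adj i j ∧ a j = false)) := by
  have hL : 0 ≤ (Fintype.card V : ℝ) / 1.5 := by positivity
  constructor
  · intro hFNE
    refine ⟨fun i hi j hij => Bool.eq_true_of_not_eq_false fun hj => ?_, fun i hi => ?_⟩
    · refine (hFNE i true).not_gt (perceivedCost_lt_perceivedCost hF0 ?_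
        fun k hik => actualCost_update_true_le hL hik.ne')
      rw [actualCost_of_true (Function.update_self i true a)]
      linarith [four_thirds_le_actualCost (C := 1) hi hij hj]
    · by_contra! hsecure
      simp only [ne_eq, Bool.not_eq_false] at hsecure
      refine (hFNE i false).not_gt (perceivedCost_lt_perceivedCost hF0 ?_
        fun k hik => (actualCost_update_of_true hik.ne' (hsecure k hik) false).le)
      rw [actualCost_eq_two_thirds (Function.update_self i false a)
        fun k hik => (Function.update_of_ne hik.ne' _ _).trans (hsecure k hik),
        actualCost_of_true hi]
      norm_num
  · rintro ⟨hindep, hdom⟩ i b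
    cases hi : a i <;> cases b
    · rw [Function.update_eq_self_iff.mpr hi.symm]
    · refine perceivedCost_le_perceivedCost hF0 ?_
        fun k hik => (actualCost_update_of_true hik.ne' (hindep i hi k hik) true).ge
      rw [actualCost_eq_two_thirds hi (hindep i hi),
        actualCost_of_true (Function.update_self i true a)]
      norm_num
    · obtain ⟨j, hij, hj⟩ := hdom i hi
      refine perceivedCost_le_perceivedCost hF0 ?_
        fun k hik => actualCost_le_update_false hL hik.ne'
      have := four_thirds_le_actualCost (C := 1) (Function.update_self i false a) hij
        ((Function.update_of_ne hij.ne' _ _).trans hj)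
      rw [actualCost_of_true hi]
      linarith
    · rw [Function.update_eq_self_iff.mpr hi.symm]

/-- Structural characterization of FNE for `C = 1`, `L = n/1.5`: a profile is a friendship Nash
equilibrium (for any `F ∈ [0,1]`) iff (a) every insecure player has only secure neighbors and
(b) every inoculated player has at least one insecure neighbor. Equivalently, the insecure
players form an independent dominating set and the secure players a minimal vertex cover. -/
theorem stmt13 (G : SimpleGraph V) (F : ℝ) (hF0 : 0 ≤ F) (hF1 : F ≤ 1)
    (hn : 2 ≤ Fintype.card V) (a : V → Bool) :
    isFNE G 1 ((Fintype.card V : ℝ) / 1.5) F a ↔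
      ((∀ i, a i = false → ∀ j, G.Adj i j → a j = true) ∧
       (∀ i, a i = true → ∃ j, G.Adj i j ∧ a j = false)) :=
  stmt13_general G F hF0 a
end
end
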